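/- Let β > 0, let z^k be a sequence in ℝ^N, and let x^k ∈ prox_{β‖·‖₀}(z^k) for each k. If x^k converges to x*, then there exists V > 0 such that N(x^k) = N(x*) for all k ≥ V. -/
import Mathlib


open Finset Filter

open scoped Classical

/-- Euclidean norm on `Fin n → ℝ`. -/
noncomputable def l2norm {n : ℕ} (x : Fin n → ℝ) : ℝ := Real.sqrt (∑ i, x i ^ 2)

/-- The ℓ0 "norm": the number of nonzero components, as a real number. -/
noncomputable def l0 {n : ℕ} (x : Fin n → ℝ) : ℝ :=
  ((Finset.univ.filter fun i => x i ≠ 0).card : ℝ)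

/-- The support of a vector. -/
noncomputable def supp {n : ℕ} (x : Fin n → ℝ) : Finset (Fin n) :=
  Finset.univ.filter fun i => x i ≠ 0

/-- The (set-valued) proximity operator of `β⁻¹`-scaled ℓ0 norm:
`prox_{β‖·‖₀}(z) = argmin_x (1/(2β))‖x - z‖² + ‖x‖₀`. -/
noncomputable def proxSet {n : ℕ} (β : ℝ) (z : Fin n → ℝ) : Set (Fin n → ℝ) :=
  {x | ∀ w : Fin n → ℝ,
    (1 / (2 * β)) * (l2norm (x - z)) ^ 2 + l0 x ≤ (1 / (2 * β)) * (l2norm (w - z)) ^ 2 + l0 w}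

/-- The coordinate projection onto `B_𝒩 = {x : supp x ⊆ 𝒩}`. -/
def Pproj {n : ℕ} (𝒩 : Finset (Fin n)) (y : Fin n → ℝ) : Fin n → ℝ :=
  fun i => if i ∈ 𝒩 then y i else 0

lemma l2sq {n : ℕ} (y : Fin n → ℝ) : l2norm y ^ 2 = ∑ i, y i ^ 2 := by
  rw [l2norm, Real.sq_sqrt]
  exact Finset.sum_nonneg fun i _ => sq_nonneg _

lemma abs_le_l2 {n : ℕ} (y : Fin n → ℝ) (i : Fin n) : |y i| ≤ l2norm y := by
  rw [← Real.sqrt_sq_eq_abs, l2norm]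
  exact Real.sqrt_le_sqrt (Finset.single_le_sum (fun j _ => sq_nonneg (y j)) (Finset.mem_univ i))

lemma update_sum {n : ℕ} (x z : Fin n → ℝ) (i : Fin n) (a : ℝ) :
    ∑ j, (Function.update x i a j - z j) ^ 2
      = (a - z i) ^ 2 + ∑ j ∈ Finset.univ.erase i, (x j - z j) ^ 2 := by
  have : (fun j => (Function.update x i a j - z j) ^ 2)
      = Function.update (fun j => (x j - z j) ^ 2) i ((a - z i) ^ 2) := by
    funext j
    by_cases h : j = i
    · subst h; simp
    · simp [Function.update_of_ne h]
  rw [this, Finset.sum_update_of_mem (Finset.mem_univ i)]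
  simp [Finset.sdiff_singleton_eq_erase]

lemma prox_big {n : ℕ} {β : ℝ} (hβ : 0 < β) {z x : Fin n → ℝ}
    (hx : x ∈ proxSet β z) {i : Fin n} (hi : x i ≠ 0) :
    2 * β ≤ x i ^ 2 := by
  have hmem : i ∈ Finset.univ.filter fun j => x j ≠ 0 := by simp [hi]
  have hsum : ∑ j, (x j - z j) ^ 2
      = (x i - z i) ^ 2 + ∑ j ∈ Finset.univ.erase i, (x j - z j) ^ 2 := by
    exact (Finset.add_sum_erase _ (fun j => (x j - z j) ^ 2) (Finset.mem_univ i)).symm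
  -- step: l0 (update x i 0) = l0 x - 1
  have hl0zero : l0 (Function.update x i (0:ℝ)) = l0 x - 1 := by
    have hfilt : (Finset.univ.filter fun j => Function.update x i (0:ℝ) j ≠ 0)
        = (Finset.univ.filter fun j => x j ≠ 0).erase i := by
      ext j
      by_cases h : j = i
      · subst h; simp
      · simp [Function.update_of_ne h, h]
    rw [l0, l0, hfilt, Finset.card_erase_of_mem hmem]
    have hpos : 0 < (Finset.univ.filter fun j => x j ≠ 0).card := Finset.card_pos.2 ⟨i, hmem⟩
    push_cast [Nat.cast_sub hpos]
    ring
  have h2 := hx (Function.update x i (0:ℝ))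
  rw [show Function.update x i (0:ℝ) - z = fun j => Function.update x i (0:ℝ) j - z j from rfl] at h2
  have hb : (0:ℝ) < 1 / (2 * β) := by positivity
  -- expand the squared norms
  have e1 : l2norm (x - z) ^ 2 = (x i - z i) ^ 2 + ∑ j ∈ Finset.univ.erase i, (x j - z j) ^ 2 := by
    rw [l2sq]; exact hsum
  have e2 : l2norm (fun j => Function.update x i (0:ℝ) j - z j) ^ 2
      = (0 - z i) ^ 2 + ∑ j ∈ Finset.univ.erase i, (x j - z j) ^ 2 := by
    rw [l2sq]; exact update_sum x z i 0
  rw [e1, e2, hl0zero] at h2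
  -- gives 2β ≤ z i ^2 - (x i - z i)^2
  have hne : (2 * β) ≠ 0 := by positivity
  have key1 : 2 * β ≤ z i ^ 2 - (x i - z i) ^ 2 := by
    have h2' : 1 / (2 * β) * ((x i - z i) ^ 2) + 1 ≤ 1 / (2 * β) * ((0 - z i) ^ 2) := by
      linarith
    have h3 := mul_le_mul_of_nonneg_left h2' (by positivity : (0:ℝ) ≤ 2 * β)
    field_simp at h3
    nlinarith [h3]
  have hzne : z i ≠ 0 := by
    intro h
    rw [h] at key1
    nlinarith [sq_nonneg (x i - 0)]
  -- step: x i = z i, using w = update x i (z i)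
  have hl0z : l0 (Function.update x i (z i)) = l0 x := by
    have hfilt : (Finset.univ.filter fun j => Function.update x i (z i) j ≠ 0)
        = (Finset.univ.filter fun j => x j ≠ 0) := by
      ext j
      by_cases h : j = i
      · subst h; simp [hzne, hi]
      · simp [Function.update_of_ne h]
    rw [l0, l0, hfilt]
  have h1 := hx (Function.update x i (z i))
  rw [show Function.update x i (z i) - z = fun j => Function.update x i (z i) j - z j from rfl] at h1
  have e3 : l2norm (fun j => Function.update x i (z i) j - z j) ^ 2
      = (z i - z i) ^ 2 + ∑ j ∈ Finset.univ.erase i, (x j - z j) ^ 2 := by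
    rw [l2sq]; exact update_sum x z i (z i)
  rw [e1, e3, hl0z] at h1
  have hxz : x i = z i := by
    have h1' : 1 / (2 * β) * ((x i - z i) ^ 2) ≤ 1 / (2 * β) * ((z i - z i) ^ 2) := by
      linarith
    have : 1 / (2 * β) * ((x i - z i) ^ 2) ≤ 0 := by
      have : ((z i - z i) ^ 2 : ℝ) = 0 := by ring
      linarith
    have h0 : (x i - z i) ^ 2 ≤ 0 := by
      by_contra hc
      push_neg at hc
      nlinarith
    have := le_antisymm h0 (sq_nonneg _)
    nlinarith [this]
  rw [hxz]
  nlinarith [key1, sq_nonneg (x i - z i), hxz]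

/-- If `x^k ∈ prox_{β‖·‖₀}(z^k)` and `x^k → x*`, then eventually `supp (x^k) = supp x*`. -/
theorem prox_support_stabilizes {N : ℕ} (β : ℝ) (hβ : 0 < β)
    (z x : ℕ → Fin N → ℝ) (xs : Fin N → ℝ)
    (hprox : ∀ k, x k ∈ proxSet β (z k))
    (hconv : ∀ ε : ℝ, 0 < ε → ∃ V : ℕ, ∀ k ≥ V, l2norm (x k - xs) < ε) :
    ∃ V : ℕ, 0 < V ∧ ∀ k ≥ V, supp (x k) = supp xs := by
  set s : ℝ := Real.sqrt (2 * β) with hs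
  have hs0 : 0 < s := Real.sqrt_pos.2 (by positivity)
  -- every nonzero coordinate of x k is at least s in absolute value
  have hbig : ∀ k i, x k i ≠ 0 → s ≤ |x k i| := by
    intro k i hne
    have := prox_big hβ (hprox k) hne
    calc s ≤ Real.sqrt (x k i ^ 2) := Real.sqrt_le_sqrt this
    _ = |x k i| := Real.sqrt_sq_eq_abs _
  -- coordinatewise convergence bound
  have hcoord : ∀ (k : ℕ) (i : Fin N), |x k i - xs i| ≤ l2norm (x k - xs) := by
    intro k i
    exact abs_le_l2 (x k - xs) i
  -- every nonzero coordinate of xs is at least s in absolute value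
  have hbigs : ∀ i, xs i ≠ 0 → s ≤ |xs i| := by
    intro i hne
    have habs : 0 < |xs i| := abs_pos.2 hne
    have key : ∀ δ : ℝ, 0 < δ → s - δ ≤ |xs i| := by
      intro δ hδ
      set δ' : ℝ := min δ (|xs i| / 2) with hδ'
      have hδ'0 : 0 < δ' := lt_min hδ (by linarith)
      obtain ⟨V, hV⟩ := hconv δ' hδ'0
      have h1 : |x V i - xs i| < δ' := lt_of_le_of_lt (hcoord V i) (hV V le_rfl)
      have hxne : x V i ≠ 0 := by
        intro h0
        rw [h0] at h1
        rw [abs_sub_comm] at h1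
        simp at h1
        have : δ' ≤ |xs i| / 2 := min_le_right _ _
        linarith
      have := hbig V i hxne
      have h2 : |x V i| ≤ |xs i| + δ' := by
        have := abs_sub_abs_le_abs_sub (x V i) (xs i)
        linarith [le_of_lt h1]
      have : δ' ≤ δ := min_le_left _ _
      linarith
    by_contra hc
    push_neg at hc
    have := key ((s - |xs i|) / 2) (by linarith)
    linarith
  obtain ⟨V, hV⟩ := hconv (s / 2) (by linarith)
  refine ⟨V + 1, Nat.succ_pos V, fun k hk => ?_⟩
  have hkV : k ≥ V := le_trans (Nat.le_succ V) hk
  have hd : ∀ i, |x k i - xs i| < s / 2 := fun i => lt_of_le_of_lt (hcoord k i) (hV k hkV)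
  ext i
  simp only [supp, Finset.mem_filter, Finset.mem_univ, true_and]
  constructor
  · intro hne
    have h1 := hbig k i hne
    intro h0
    have h2 := hd i
    rw [h0] at h2
    simp at h2
    linarith
  · intro hne
    have h1 := hbigs i hne
    intro h0
    have := hd i
    rw [h0] at this
    rw [abs_sub_comm] at this
    simp at this
    linarith
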